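/- arXiv:1003.2440 — 2 statements merged into one kernel-verified Lean document; each statement's English description precedes it below -/
import Mathlib

section
/- For every m×n real matrix B, sup_{y ∈ Δ_m} inf_{z ∈ Δ_n} Σ_{i,j} y_i B_{ij} z_j = inf_{z ∈ Δ_n} sup_{y ∈ Δ_m} Σ_{i,j} y_i B_{ij} z_j; i.e., the zero-sum matrix game with payoff matrix B has a value in mixed strategies. -/
open scoped BigOperators

/-- Expected payoff to player 1 in the matrix game `B` when player 1 uses the
mixed strategy `y` and player 2 uses the mixed strategy `z`. -/
noncomputable def expectedPayoff {m n : ℕ} (B : Matrix (Fin m) (Fin n) ℝ)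
    (y : Fin m → ℝ) (z : Fin n → ℝ) : ℝ :=
  ∑ i, ∑ j, y i * B i j * z j

/-!
Weak duality `sup inf ≤ inf sup` holds for any bounded payoff. Conversely, it suffices that for
every level `c` either some `z ∈ Δₙ` keeps all row payoffs `(B z)ᵢ` at most `c`, or some
`y ∈ Δₘ` guarantees more than `c` against every `z`. If the first fails, the compact convex set
`B Δₙ` misses the closed orthant `{x | x ≤ c}`, and Hahn–Banach separates them by a functional
`x ↦ g ⬝ x`. Being bounded below on the orthant forces `g ≤ 0`, so `-g` normalised is the
required `y`.
-/

open Set Matrix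

section Minimax

variable {α β γ : Type*} [Nonempty α] [Nonempty β] {f : α → β → γ} {L U : γ}

theorem ciSup_ciInf_le_ciInf_ciSup [ConditionallyCompleteLattice γ] (hL : ∀ a b, L ≤ f a b)
    (hU : ∀ a b, f a b ≤ U) : ⨆ a, ⨅ b, f a b ≤ ⨅ b, ⨆ a, f a b :=
  ciSup_le fun a => le_ciInf fun b =>
    (ciInf_le ⟨L, forall_mem_range.2 (hL a)⟩ b).trans
      (le_ciSup ⟨U, forall_mem_range.2 (hU · b)⟩ a)

theorem ciSup_ciInf_eq_ciInf_ciSup_of_alternative [ConditionallyCompleteLinearOrder γ]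
    [DenselyOrdered γ] (hL : ∀ a b, L ≤ f a b) (hU : ∀ a b, f a b ≤ U)
    (halt : ∀ c, (∃ b, ∀ a, f a b ≤ c) ∨ ∃ a, ∀ b, c ≤ f a b) :
    ⨆ a, ⨅ b, f a b = ⨅ b, ⨆ a, f a b := by
  refine le_antisymm (ciSup_ciInf_le_ciInf_ciSup hL hU)
    (le_of_forall_gt_imp_ge_of_dense fun c hc => ?_)
  obtain ⟨a₀⟩ := ‹Nonempty α›
  obtain ⟨b₀⟩ := ‹Nonempty β›
  have hsup : ∀ b, BddAbove (range fun a => f a b) := fun b => ⟨U, forall_mem_range.2 (hU · b)⟩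
  have hinf : ∀ a, BddBelow (range (f a)) := fun a => ⟨L, forall_mem_range.2 (hL a)⟩
  rcases halt c with ⟨b, hb⟩ | ⟨a, ha⟩
  · calc ⨅ b, ⨆ a, f a b ≤ ⨆ a, f a b :=
          ciInf_le ⟨L, forall_mem_range.2 fun b => (hL a₀ b).trans (le_ciSup (hsup b) a₀)⟩ b
      _ ≤ c := ciSup_le hb
  · refine absurd hc (not_lt.2 ?_)
    calc c ≤ ⨅ b, f a b := le_ciInf ha
      _ ≤ ⨆ a, ⨅ b, f a b :=
          le_ciSup ⟨U, forall_mem_range.2 fun a => (ciInf_le (hinf a) b₀).trans (hU a b₀)⟩ a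

end Minimax

section Alternative

variable {ι κ : Type*} [Fintype ι] [Fintype κ]

theorem dotProduct_le_of_mem_stdSimplex {y x : ι → ℝ} {c : ℝ} (hy : y ∈ stdSimplex ℝ ι)
    (hx : ∀ i, x i ≤ c) : y ⬝ᵥ x ≤ c :=
  calc y ⬝ᵥ x ≤ ∑ i, y i * c :=
        Finset.sum_le_sum fun i _ => mul_le_mul_of_nonneg_left (hx i) (hy.1 i)
    _ = c := by rw [← Finset.sum_mul, hy.2, one_mul]

theorem dotProduct_const_of_mem_stdSimplex {y : ι → ℝ} (hy : y ∈ stdSimplex ℝ ι) (c : ℝ) :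
    y ⬝ᵥ Function.const ι c = c := by
  simp [dotProduct, ← Finset.sum_mul, hy.2]

theorem nonpos_of_bddBelow_dotProduct_Iic [DecidableEq ι] {g x₀ : ι → ℝ}
    (h : BddBelow ((g ⬝ᵥ ·) '' Iic x₀)) : g ≤ 0 := by
  obtain ⟨L, hL⟩ := h
  intro i
  by_contra! hg
  have hx₀ : L ≤ g ⬝ᵥ x₀ := hL ⟨x₀, self_mem_Iic, rfl⟩
  set t := (g ⬝ᵥ x₀ - L + 1) / g i
  have hsingle : (0 : ι → ℝ) ≤ Pi.single i 1 := Pi.single_nonneg.2 zero_le_one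
  have hmem : x₀ - t • Pi.single i 1 ∈ Iic x₀ :=
    sub_le_self _ (smul_nonneg (div_nonneg (by linarith) hg.le) hsingle)
  have hlt := hL ⟨_, hmem, rfl⟩
  simp only [dotProduct_sub, dotProduct_smul, dotProduct_single, smul_eq_mul, mul_one, t] at hlt
  rw [div_mul_cancel₀ _ hg.ne'] at hlt
  linarith

theorem exists_smul_mem_stdSimplex {w : ι → ℝ} (hw : 0 ≤ w) (hw₀ : w ≠ 0) :
    ∃ s : ℝ, 0 < s ∧ ∃ y ∈ stdSimplex ℝ ι, w = s • y := by
  have hs : 0 < ∑ i, w i := by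
    obtain ⟨i, hi⟩ := Function.ne_iff.1 hw₀
    exact Finset.sum_pos' (fun i _ => hw i) ⟨i, Finset.mem_univ i, (hw i).lt_of_ne' hi⟩
  refine ⟨_, hs, (∑ i, w i)⁻¹ • w, ⟨fun i => ?_, ?_⟩, ?_⟩
  · exact mul_nonneg (inv_nonneg.2 hs.le) (hw i)
  · simp [← Finset.mul_sum, hs.ne']
  · rw [smul_smul, mul_inv_cancel₀ hs.ne', one_smul]

theorem exists_mulVec_le_or_exists_lt_dotProduct_mulVec [Nonempty κ] (B : Matrix ι κ ℝ) (c : ℝ) :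
    (∃ z ∈ stdSimplex ℝ κ, ∀ i, (B *ᵥ z) i ≤ c) ∨
      ∃ y ∈ stdSimplex ℝ ι, ∀ z ∈ stdSimplex ℝ κ, c < y ⬝ᵥ (B *ᵥ z) := by
  classical
  refine or_iff_not_imp_left.2 fun hK => ?_
  obtain ⟨f, u, v, hfK, huv, hfD⟩ := geometric_hahn_banach_compact_closed
    ((convex_stdSimplex ℝ κ).linear_image B.mulVecLin)
    ((isCompact_stdSimplex ℝ κ).image B.mulVecLin.continuous_of_finiteDimensional)
    (convex_Iic (Function.const ι c)) isClosed_Iic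
    (disjoint_left.2 <| by rintro _ ⟨z, hz, rfl⟩ hx; exact hK ⟨z, hz, hx⟩)
  set g := (dotProductEquiv ℝ ι).symm f.toLinearMap
  have hf : ∀ x, f x = g ⬝ᵥ x := fun x => by
    rw [← dotProductEquiv_apply_apply, LinearEquiv.apply_symm_apply]; rfl
  have hg : g ≤ 0 := nonpos_of_bddBelow_dotProduct_Iic
    ⟨v, by rintro _ ⟨x, hx, rfl⟩; exact (hf x ▸ hfD x hx).le⟩
  have hsep : ∀ z ∈ stdSimplex ℝ κ, -g ⬝ᵥ Function.const ι c < -g ⬝ᵥ (B *ᵥ z) := by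
    intro z hz
    simp only [neg_dotProduct, neg_lt_neg_iff, ← hf]
    have hz' : f (B *ᵥ z) < u := hfK _ ⟨z, hz, rfl⟩
    linarith [hfD _ self_mem_Iic]
  obtain ⟨⟨z₀, hz₀⟩⟩ : Nonempty (stdSimplex ℝ κ) := inferInstance
  obtain ⟨s, hs, y, hy, hgy⟩ := exists_smul_mem_stdSimplex (neg_nonneg.2 hg)
    (fun h => by simpa [h] using hsep z₀ hz₀)
  refine ⟨y, hy, fun z hz => ?_⟩
  have := hsep z hz
  rw [hgy, smul_dotProduct, smul_dotProduct, dotProduct_const_of_mem_stdSimplex hy] at this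
  exact lt_of_mul_lt_mul_left this hs.le

end Alternative

theorem expectedPayoff_eq_dotProduct_mulVec {m n : ℕ} (B : Matrix (Fin m) (Fin n) ℝ)
    (y : Fin m → ℝ) (z : Fin n → ℝ) : expectedPayoff B y z = y ⬝ᵥ (B *ᵥ z) := by
  simp only [expectedPayoff, dotProduct, mulVec, Finset.mul_sum, mul_assoc]

theorem continuous_expectedPayoff {m n : ℕ} (B : Matrix (Fin m) (Fin n) ℝ) :
    Continuous fun p : (Fin m → ℝ) × (Fin n → ℝ) => expectedPayoff B p.1 p.2 := by
  unfold expectedPayoff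
  fun_prop

/-- **Minimax theorem for matrix games.** Every finite zero-sum matrix game
has a value in mixed strategies: the sup-inf of the expected payoff over the
standard simplices equals the inf-sup. -/
theorem matrix_game_minimax (m n : ℕ) (hm : 0 < m) (hn : 0 < n)
    (B : Matrix (Fin m) (Fin n) ℝ) :
    (⨆ y : stdSimplex ℝ (Fin m), ⨅ z : stdSimplex ℝ (Fin n),
        expectedPayoff B y z) =
    (⨅ z : stdSimplex ℝ (Fin n), ⨆ y : stdSimplex ℝ (Fin m),
        expectedPayoff B y z) := by
  have : Nonempty (Fin m) := ⟨⟨0, hm⟩⟩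
  have : Nonempty (Fin n) := ⟨⟨0, hn⟩⟩
  have hcont : Continuous fun p : stdSimplex ℝ (Fin m) × stdSimplex ℝ (Fin n) =>
      expectedPayoff B p.1 p.2 :=
    (continuous_expectedPayoff B).comp (continuous_subtype_val.prodMap continuous_subtype_val)
  obtain ⟨L, hL⟩ := (isCompact_range hcont).bddBelow
  obtain ⟨U, hU⟩ := (isCompact_range hcont).bddAbove
  refine ciSup_ciInf_eq_ciInf_ciSup_of_alternative (fun y z => hL ⟨(y, z), rfl⟩)
    (fun y z => hU ⟨(y, z), rfl⟩) fun c => ?_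
  simp only [expectedPayoff_eq_dotProduct_mulVec]
  rcases exists_mulVec_le_or_exists_lt_dotProduct_mulVec B c with ⟨z, hz, hBz⟩ | ⟨y, hy, hyB⟩
  · exact .inl ⟨⟨z, hz⟩, fun y => dotProduct_le_of_mem_stdSimplex y.2 hBz⟩
  · exact .inr ⟨⟨y, hy⟩, fun z => (hyB z z.2).le⟩
end

section
/- The Shapley operator of a stopping stochastic game is a sup-norm contraction: let the game have p game elements, stage payoff matrices a^k of size m_k × n_k, and transition probabilities q^{kl}_{ij} ≥ 0 satisfying Σ_{l=1}^p q^{kl}_{ij} ≤ β for all k, i, j, where 0 ≤ β < 1. Define T : ℝ^p → ℝ^p by (T v)_k = val(B_k(v)), where B_k(v) is the m_k × n_k matrix with entries b^k_{ij} = a^k_{ij} + Σ_{l=1}^p q^{kl}_{ij} v_l. Then for all u, v ∈ ℝ^p, max_k |(T u)_k − (T v)_k| ≤ β · max_k |u_k − v_k|. -/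
open scoped BigOperators

/-- The value (in mixed strategies) of the zero-sum matrix game `B`:
`val(B) = sup_{y ∈ Δ_m} inf_{z ∈ Δ_n} ∑_{i,j} y_i B_{ij} z_j`. -/
noncomputable def matrixGameValue {m n : ℕ} (B : Matrix (Fin m) (Fin n) ℝ) : ℝ :=
  ⨆ y : stdSimplex ℝ (Fin m), ⨅ z : stdSimplex ℝ (Fin n), expectedPayoff B y z

/-- The auxiliary matrix `B_k(v)` of a stochastic game, with entries
`b^k_{ij} = a^k_{ij} + ∑_l q^{kl}_{ij} v_l`. -/
noncomputable def gameElementMatrix {p : ℕ} {m n : Fin p → ℕ}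
    (a : ∀ k, Matrix (Fin (m k)) (Fin (n k)) ℝ)
    (q : ∀ k, Fin (m k) → Fin (n k) → Fin p → ℝ)
    (v : Fin p → ℝ) (k : Fin p) : Matrix (Fin (m k)) (Fin (n k)) ℝ :=
  fun i j => a k i j + ∑ l, q k i j l * v l

/-- The Shapley operator `T` of the stochastic game: `(T v)_k = val(B_k(v))`. -/
noncomputable def shapleyOperator {p : ℕ} {m n : Fin p → ℕ}
    (a : ∀ k, Matrix (Fin (m k)) (Fin (n k)) ℝ)
    (q : ∀ k, Fin (m k) → Fin (n k) → Fin p → ℝ)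
    (v : Fin p → ℝ) : Fin p → ℝ :=
  fun k => matrixGameValue (gameElementMatrix a q v k)

/-!
Entrywise, `B_k(u)` and `B_k(v)` differ by `∑_l q^{kl}_{ij} (u_l - v_l)`, which is at most
`β ‖u - v‖_∞` in absolute value since the `q^{kl}_{ij}` are nonnegative with row sums at most
`β`. The value of a matrix game is monotone in the payoff matrix and shifts by `c` when `c` is
added to every entry, because mixed strategies are probability vectors; hence `|val B - val C|`
is at most the largest entrywise difference of `B` and `C`.
-/

open Finset

section MatrixGame

variable {m n : ℕ}

lemma abs_expectedPayoff_le (B : Matrix (Fin m) (Fin n) ℝ) (y : stdSimplex ℝ (Fin m))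
    (z : stdSimplex ℝ (Fin n)) :
    |expectedPayoff B y z| ≤ ∑ i, ∑ j, |B i j| := calc
  |expectedPayoff B y z| ≤ ∑ i, ∑ j, |y i * B i j * z j| :=
    (abs_sum_le_sum_abs _ _).trans (sum_le_sum fun i _ => abs_sum_le_sum_abs _ _)
  _ ≤ ∑ i, ∑ j, 1 * |B i j| * 1 := by
    gcongr with i _ j _
    rw [abs_mul, abs_mul, abs_of_nonneg (stdSimplex.zero_le y i),
      abs_of_nonneg (stdSimplex.zero_le z j)]
    gcongr
    exacts [stdSimplex.zero_le z j, stdSimplex.le_one y i, stdSimplex.le_one z j]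
  _ = ∑ i, ∑ j, |B i j| := by simp

lemma expectedPayoff_le_add {B C : Matrix (Fin m) (Fin n) ℝ} {c : ℝ}
    (h : ∀ i j, B i j ≤ C i j + c) (y : stdSimplex ℝ (Fin m)) (z : stdSimplex ℝ (Fin n)) :
    expectedPayoff B y z ≤ expectedPayoff C y z + c := calc
  expectedPayoff B y z ≤ ∑ i, ∑ j, y i * (C i j + c) * z j := by
    unfold expectedPayoff
    gcongr with i _ j _
    exacts [stdSimplex.zero_le z j, stdSimplex.zero_le y i, h i j]
  _ = expectedPayoff C y z + c := by
    simp only [expectedPayoff, mul_add, add_mul, sum_add_distrib, ← mul_sum, ← sum_mul,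
      stdSimplex.sum_eq_one, mul_one, one_mul]

lemma bddBelow_range_expectedPayoff (B : Matrix (Fin m) (Fin n) ℝ) (y : stdSimplex ℝ (Fin m)) :
    BddBelow (Set.range fun z : stdSimplex ℝ (Fin n) => expectedPayoff B y z) :=
  ⟨-∑ i, ∑ j, |B i j|,
    Set.forall_mem_range.2 fun z => neg_le_of_abs_le (abs_expectedPayoff_le B y z)⟩

lemma bddAbove_range_iInf_expectedPayoff (hn : 0 < n) (B : Matrix (Fin m) (Fin n) ℝ) :
    BddAbove (Set.range fun y : stdSimplex ℝ (Fin m) =>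
      ⨅ z : stdSimplex ℝ (Fin n), expectedPayoff B y z) := by
  have : Nonempty (Fin n) := Fin.pos_iff_nonempty.mp hn
  refine ⟨∑ i, ∑ j, |B i j|, Set.forall_mem_range.2 fun y => ?_⟩
  obtain ⟨z⟩ : Nonempty (stdSimplex ℝ (Fin n)) := inferInstance
  exact (ciInf_le (bddBelow_range_expectedPayoff B y) z).trans
    (le_of_abs_le (abs_expectedPayoff_le B y z))

lemma matrixGameValue_le_add (hm : 0 < m) (hn : 0 < n) {B C : Matrix (Fin m) (Fin n) ℝ}
    {c : ℝ} (h : ∀ i j, B i j ≤ C i j + c) :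
    matrixGameValue B ≤ matrixGameValue C + c := by
  have : Nonempty (Fin m) := Fin.pos_iff_nonempty.mp hm
  have : Nonempty (Fin n) := Fin.pos_iff_nonempty.mp hn
  refine ciSup_le fun y => ?_
  calc ⨅ z : stdSimplex ℝ (Fin n), expectedPayoff B y z
      ≤ (⨅ z : stdSimplex ℝ (Fin n), expectedPayoff C y z) + c :=
        sub_le_iff_le_add.1 <| le_ciInf fun z => sub_le_iff_le_add.2 <|
          (ciInf_le (bddBelow_range_expectedPayoff B y) z).trans (expectedPayoff_le_add h y z)
    _ ≤ matrixGameValue C + c := by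
        gcongr
        exact le_ciSup (bddAbove_range_iInf_expectedPayoff hn C) y

lemma abs_matrixGameValue_sub_le (hm : 0 < m) (hn : 0 < n) {B C : Matrix (Fin m) (Fin n) ℝ}
    {c : ℝ} (h : ∀ i j, |B i j - C i j| ≤ c) :
    |matrixGameValue B - matrixGameValue C| ≤ c := by
  refine abs_sub_le_iff.2 ⟨?_, ?_⟩ <;>
    refine sub_le_iff_le_add'.2 (matrixGameValue_le_add hm hn fun i j => ?_)
  · exact sub_le_iff_le_add'.1 (abs_sub_le_iff.1 (h i j)).1
  · exact sub_le_iff_le_add'.1 (abs_sub_le_iff.1 (h i j)).2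

end MatrixGame

lemma abs_gameElementMatrix_sub_le {p : ℕ} {m n : Fin p → ℕ}
    (a : ∀ k, Matrix (Fin (m k)) (Fin (n k)) ℝ)
    {q : ∀ k, Fin (m k) → Fin (n k) → Fin p → ℝ} {β : ℝ}
    {k : Fin p} {i : Fin (m k)} {j : Fin (n k)}
    (hq : ∀ l, 0 ≤ q k i j l) (hqβ : ∑ l, q k i j l ≤ β)
    {u v : Fin p → ℝ} {D : ℝ} (hD0 : 0 ≤ D) (hD : ∀ l, |u l - v l| ≤ D) :
    |gameElementMatrix a q u k i j - gameElementMatrix a q v k i j| ≤ β * D := calc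
  _ = |∑ l, q k i j l * (u l - v l)| := by
    simp only [gameElementMatrix, mul_sub, sum_sub_distrib, add_sub_add_left_eq_sub]
  _ ≤ ∑ l, q k i j l * |u l - v l| := by
    refine (abs_sum_le_sum_abs _ _).trans_eq (sum_congr rfl fun l _ => ?_)
    rw [abs_mul, abs_of_nonneg (hq l)]
  _ ≤ ∑ l, q k i j l * D := by
    gcongr with l
    exacts [hq l, hD l]
  _ ≤ β * D := by
    rw [← sum_mul]
    gcongr

theorem shapleyOperator_contraction_general (p : ℕ) (m n : Fin p → ℕ)
    (hm : ∀ k, 0 < m k) (hn : ∀ k, 0 < n k)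
    (a : ∀ k, Matrix (Fin (m k)) (Fin (n k)) ℝ)
    (q : ∀ k, Fin (m k) → Fin (n k) → Fin p → ℝ)
    (hq : ∀ k i j l, 0 ≤ q k i j l)
    (β : ℝ) (hβ0 : 0 ≤ β)
    (hqβ : ∀ k i j, ∑ l, q k i j l ≤ β)
    (u v : Fin p → ℝ) :
    (⨆ k, |shapleyOperator a q u k - shapleyOperator a q v k|) ≤
      β * ⨆ k, |u k - v k| := by
  set D := ⨆ k, |u k - v k|
  have hD : ∀ l, |u l - v l| ≤ D := le_ciSup (Set.finite_range _).bddAbove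
  have hD0 : 0 ≤ D := Real.iSup_nonneg fun k => abs_nonneg _
  refine Real.iSup_le (fun k => ?_) (mul_nonneg hβ0 hD0)
  exact abs_matrixGameValue_sub_le (hm k) (hn k) fun i j =>
    abs_gameElementMatrix_sub_le a (hq k i j) (hqβ k i j) hD0 hD

/-- **The Shapley operator of a stopping stochastic game is a sup-norm
`β`-contraction:** if all transition probabilities are nonnegative and
`∑_l q^{kl}_{ij} ≤ β < 1`, then
`max_k |(T u)_k − (T v)_k| ≤ β · max_k |u_k − v_k|`. -/
theorem shapleyOperator_contraction (p : ℕ) (hp : 0 < p) (m n : Fin p → ℕ)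
    (hm : ∀ k, 0 < m k) (hn : ∀ k, 0 < n k)
    (a : ∀ k, Matrix (Fin (m k)) (Fin (n k)) ℝ)
    (q : ∀ k, Fin (m k) → Fin (n k) → Fin p → ℝ)
    (hq : ∀ k i j l, 0 ≤ q k i j l)
    (β : ℝ) (hβ0 : 0 ≤ β) (hβ1 : β < 1)
    (hqβ : ∀ k i j, ∑ l, q k i j l ≤ β)
    (u v : Fin p → ℝ) :
    (⨆ k, |shapleyOperator a q u k - shapleyOperator a q v k|) ≤
      β * ⨆ k, |u k - v k| :=
  shapleyOperator_contraction_general p m n hm hn a q hq β hβ0 hqβ u v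
end
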